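/- Let A = [[Id₂,0],[0,R(θ)]] ∈ GL(4,ℝ) where R(θ) is the rotation matrix by angle θ with sin θ ≠ 0. Then for X ∈ GL(4,ℝ) with columns x₁,x₂,x₃,x₄, the matrix XᵗX commutes with A if and only if xᵢ ⊥ xⱼ for i ∈ {1,2}, j ∈ {3,4}, x₃ ⊥ x₄, and ‖x₃‖ = ‖x₄‖. -/

import Mathlib

/-! `XᵀX` is the Gram matrix of the columns of `X`, hence symmetric. A symmetric matrix
`[[P, Q], [Qᵀ, S]]` commutes with `[[1, 0], [0, R(θ)]]` iff `Q R(θ) = Q` and `S R(θ) = R(θ) S`.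
For `sin θ ≠ 0` the rotation fixes no nonzero vector, so `Q = 0`, and a symmetric `2 × 2`
matrix commuting with it is scalar. -/

open Matrix Real

/-- `A = [[Id₂, 0],[0, R(θ)]]`, where `R(θ)` is the 2×2 rotation matrix by angle `θ`. -/
noncomputable def Amat (θ : ℝ) : Matrix (Fin 4) (Fin 4) ℝ :=
  !![1, 0, 0, 0; 0, 1, 0, 0; 0, 0, cos θ, -sin θ; 0, 0, sin θ, cos θ]

/-- `R(θ) - 1` has determinant `(cos θ - 1)² + sin² θ > 0`. -/
theorem rotation_fixed_eq_zero {θ b d : ℝ} (hθ : sin θ ≠ 0)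
    (h₁ : b * cos θ + d * sin θ = b) (h₂ : -(b * sin θ) + d * cos θ = d) : b = 0 ∧ d = 0 := by
  have hdet : (cos θ - 1) ^ 2 + sin θ ^ 2 ≠ 0 := by positivity
  have hb : b * ((cos θ - 1) ^ 2 + sin θ ^ 2) = 0 := by
    linear_combination (cos θ - 1) * h₁ - sin θ * h₂
  have hd : d * ((cos θ - 1) ^ 2 + sin θ ^ 2) = 0 := by
    linear_combination sin θ * h₁ + (cos θ - 1) * h₂
  exact ⟨(mul_eq_zero.mp hb).resolve_right hdet, (mul_eq_zero.mp hd).resolve_right hdet⟩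

theorem mul_Amat_eq_Amat_mul_iff_of_isSymm {θ : ℝ} (hθ : sin θ ≠ 0) {B : Matrix (Fin 4) (Fin 4) ℝ}
    (hB : B.IsSymm) :
    B * Amat θ = Amat θ * B ↔
      (B 0 2 = 0 ∧ B 0 3 = 0 ∧ B 1 2 = 0 ∧ B 1 3 = 0) ∧ B 2 3 = 0 ∧ B 2 2 = B 3 3 := by
  constructor
  · intro h
    have e02 := congr_fun₂ h 0 2
    have e03 := congr_fun₂ h 0 3
    have e12 := congr_fun₂ h 1 2
    have e13 := congr_fun₂ h 1 3
    have e22 := congr_fun₂ h 2 2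
    have e23 := congr_fun₂ h 2 3
    simp only [Amat, mul_apply, of_apply, cons_val', cons_val, cons_val_fin_one, Fin.sum_univ_four,
      cons_val_zero, cons_val_one, mul_zero, add_zero, zero_add, one_mul, zero_mul, mul_neg,
      neg_mul] at e02 e03 e12 e13 e22 e23
    obtain ⟨h02, h03⟩ := rotation_fixed_eq_zero hθ e02 e03
    obtain ⟨h12, h13⟩ := rotation_fixed_eq_zero hθ e12 e13
    have h23 : sin θ * (2 * B 2 3) = 0 := by linear_combination e22 - sin θ * hB.apply 2 3
    have h22 : sin θ * B 2 2 = sin θ * B 3 3 := by linear_combination -e23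
    exact ⟨⟨h02, h03, h12, h13⟩, by simpa [hθ] using h23, mul_left_cancel₀ hθ h22⟩
  · rintro ⟨⟨h02, h03, h12, h13⟩, h23, h22⟩
    ext i j
    fin_cases i <;> fin_cases j <;>
      simp [Amat, mul_apply, Fin.sum_univ_four, h02, h03, h12, h13, h23, h22, hB.apply 0 1,
        hB.apply 0 2, hB.apply 0 3, hB.apply 1 2, hB.apply 1 3, hB.apply 2 3, mul_comm]

theorem fin_four_forall_offDiagBlock_iff {P : Fin 4 → Fin 4 → Prop} :
    (∀ i j : Fin 4, (i : ℕ) < 2 → 2 ≤ (j : ℕ) → P i j) ↔ P 0 2 ∧ P 0 3 ∧ P 1 2 ∧ P 1 3 := by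
  constructor
  · intro h
    exact ⟨h 0 2 (by decide) (by decide), h 0 3 (by decide) (by decide),
      h 1 2 (by decide) (by decide), h 1 3 (by decide) (by decide)⟩
  · rintro ⟨h02, h03, h12, h13⟩ i j hi hj
    fin_cases i <;> fin_cases j <;> simp_all

/-- For `A = [[Id₂,0],[0,R(θ)]]` with `sin θ ≠ 0` and `X ∈ GL(4,ℝ)` with columns
`x₁,x₂,x₃,x₄`, the matrix `XᵗX` commutes with `A` iff `xᵢ ⊥ xⱼ` for `i ∈ {1,2}`,
`j ∈ {3,4}`, `x₃ ⊥ x₄` and `‖x₃‖ = ‖x₄‖` (i.e. `x₃⬝x₃ = x₄⬝x₄`). -/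
theorem stmt15 (θ : ℝ) (hθ : sin θ ≠ 0) (X : GL (Fin 4) ℝ) :
    ((X : Matrix (Fin 4) (Fin 4) ℝ)ᵀ * X) * Amat θ =
        Amat θ * ((X : Matrix (Fin 4) (Fin 4) ℝ)ᵀ * X) ↔
      (∀ i j : Fin 4, (i : ℕ) < 2 → 2 ≤ (j : ℕ) →
          (fun k => (X : Matrix (Fin 4) (Fin 4) ℝ) k i) ⬝ᵥ
            (fun k => (X : Matrix (Fin 4) (Fin 4) ℝ) k j) = 0) ∧
      (fun k => (X : Matrix (Fin 4) (Fin 4) ℝ) k 2) ⬝ᵥ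
          (fun k => (X : Matrix (Fin 4) (Fin 4) ℝ) k 3) = 0 ∧
      (fun k => (X : Matrix (Fin 4) (Fin 4) ℝ) k 2) ⬝ᵥ
          (fun k => (X : Matrix (Fin 4) (Fin 4) ℝ) k 2) =
        (fun k => (X : Matrix (Fin 4) (Fin 4) ℝ) k 3) ⬝ᵥ
          (fun k => (X : Matrix (Fin 4) (Fin 4) ℝ) k 3) := by
  rw [mul_Amat_eq_Amat_mul_iff_of_isSymm hθ (isSymm_transpose_mul_self _),
    fin_four_forall_offDiagBlock_iff]
  -- `(Xᵀ * X) i j` unfolds to the dot product of columns `i` and `j`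
  exact Iff.rfl
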